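/- arXiv:0803.0956 — 5 statements merged into one kernel-verified Lean document; each statement's English description precedes it below -/
import Mathlib

section
/- Let G be a path graph. Then for every vertex v of G, the subgraph induced by the neighborhood N(v) is an interval graph. -/
/-!
Let `T` be a clique path tree of `G`. The maximal cliques containing `v` form a path `P` in `T`;
numbering its vertices by their distance from an end of `P` gives an injection into `ℕ`. For a
neighbour `u` of `v`, the cliques containing `u` and `v` are the intersection of two subtrees of
`T`, hence a subpath of `P`, so they are numbered by an interval `I u`. Since every clique lies
in a maximal one, distinct `u, w ∈ N(v)` are adjacent exactly when some maximal clique contains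
`v, u, w`, i.e. when `I u` and `I w` meet.
-/

open SimpleGraph

variable {V : Type*}

/-- `S` separates `u` and `w` in `G`: every walk from `u` to `w` meets `S`. -/
def Separates (G : SimpleGraph V) (S : Set V) (u w : V) : Prop :=
  ∀ p : G.Walk u w, ∃ x ∈ p.support, x ∈ S

/-- `S` is a minimal `{u,w}`-separator. -/
def IsMinUWSeparator (G : SimpleGraph V) (S : Set V) (u w : V) : Prop :=
  u ≠ w ∧ ¬ G.Adj u w ∧ u ∉ S ∧ w ∉ S ∧ Separates G S u w ∧
    ∀ S' ⊂ S, ¬ Separates G S' u w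

/-- `S` is a minimal separator of `G`. -/
def IsMinSeparator (G : SimpleGraph V) (S : Set V) : Prop :=
  ∃ u w : V, IsMinUWSeparator G S u w

/-- A vertex is simplicial if its neighborhood is a clique. -/
def IsSimplicial (G : SimpleGraph V) (v : V) : Prop :=
  G.IsClique (G.neighborSet v)

/-- A maximal clique (as a vertex set). -/
def IsMaxClique (G : SimpleGraph V) (s : Set V) : Prop :=
  G.IsClique s ∧ ∀ t : Set V, G.IsClique t → s ⊆ t → s = t

/-- A graph is chordal if it has no induced cycle of length at least 4. -/
def Chordal (G : SimpleGraph V) : Prop :=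
  ∀ n : ℕ, 4 ≤ n → IsEmpty (SimpleGraph.cycleGraph n ↪g G)

/-- The type of maximal cliques of `G`. -/
abbrev MaxCliques (G : SimpleGraph V) := {s : Set V // IsMaxClique G s}

/-- `T` is a clique tree of `G`: a tree on the maximal cliques such that for each vertex
the cliques containing it induce a connected subgraph. -/
def IsCliqueTree (G : SimpleGraph V) (T : SimpleGraph (MaxCliques G)) : Prop :=
  T.IsTree ∧ ∀ v : V, (T.induce {Q : MaxCliques G | v ∈ Q.1}).Connected

/-- The set `X` induces a path in `T` (assuming `T` is a tree: connected with max degree 2). -/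
def InducesPath {α : Type*} (T : SimpleGraph α) (X : Set α) : Prop :=
  (T.induce X).Connected ∧ ∀ x : X, ((T.induce X).neighborSet x).ncard ≤ 2

/-- `T` is a clique path tree of `G`. -/
def IsCliquePathTree (G : SimpleGraph V) (T : SimpleGraph (MaxCliques G)) : Prop :=
  T.IsTree ∧ ∀ v : V, InducesPath T {Q : MaxCliques G | v ∈ Q.1}

/-- `G` is a path graph: the empty graph, or a graph admitting a clique path tree. -/
def IsPathGraph (G : SimpleGraph V) : Prop :=
  IsEmpty V ∨ ∃ T : SimpleGraph (MaxCliques G), IsCliquePathTree G T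

/-- `G` is an interval graph: intersection graph of closed real intervals. -/
def IsIntervalGraph (G : SimpleGraph V) : Prop :=
  ∃ f : V → Set ℝ, (∀ v, ∃ a b : ℝ, a ≤ b ∧ f v = Set.Icc a b) ∧
    ∀ u v : V, u ≠ v → (G.Adj u v ↔ (f u ∩ f v).Nonempty)

/-- `a` is a middle of `b, c`: every walk from `b` to `c` meets `N(a)`. -/
def IsMiddle (G : SimpleGraph V) (a b c : V) : Prop :=
  ∀ p : G.Walk b c, ∃ x ∈ p.support, G.Adj a x

/-- `a, b, c` form an asteroidal triple. -/
def AsteroidalTriple (G : SimpleGraph V) (a b c : V) : Prop :=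
  a ≠ b ∧ a ≠ c ∧ b ≠ c ∧ ¬ G.Adj a b ∧ ¬ G.Adj a c ∧ ¬ G.Adj b c ∧
  (∃ p : G.Walk b c, ∀ x ∈ p.support, ¬ G.Adj a x) ∧
  (∃ p : G.Walk a c, ∀ x ∈ p.support, ¬ G.Adj b x) ∧
  (∃ p : G.Walk a b, ∀ x ∈ p.support, ¬ G.Adj c x)

/-- The closed neighborhood clique `Q_v` of a simplicial vertex. -/
def Qv (G : SimpleGraph V) (v : V) : Set V := insert v (G.neighborSet v)

/-- `S_v`: the vertices of `Q_v` having a neighbor outside `Q_v`. -/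
def Sv (G : SimpleGraph V) (v : V) : Set V :=
  {x | x ∈ Qv G v ∧ ∃ y, y ∉ Qv G v ∧ G.Adj x y}

/-- A simplicial vertex is special if `S_v` is an inclusion-maximal minimal separator. -/
def IsSpecial (G : SimpleGraph V) (v : V) : Prop :=
  IsSimplicial G v ∧ IsMinSeparator G (Sv G v) ∧
    ∀ S : Set V, IsMinSeparator G S → Sv G v ⊆ S → S = Sv G v

/-- Connected components of `G ∖ S` containing a vertex complete to `S`. -/
def CompleteComponents (G : SimpleGraph V) (S : Set V) :
    Set ((G.induce (Sᶜ : Set V)).ConnectedComponent) :=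
  {C | ∃ x : (Sᶜ : Set V), (G.induce (Sᶜ : Set V)).connectedComponentMk x = C ∧
        S ⊆ G.neighborSet x.1}

/-- The wheel graph: an `n`-cycle plus a universal vertex (`none`). -/
def wheelGraph (n : ℕ) : SimpleGraph (Option (Fin n)) :=
  SimpleGraph.fromRel (fun a b =>
    (∃ i j : Fin n, a = some i ∧ b = some j ∧ (SimpleGraph.cycleGraph n).Adj i j) ∨
    (a = none ∧ b ≠ none))

/-- `y` lies on the tree-path between `x` and `z` in `T`. -/
def OnTreePath {α : Type*} (T : SimpleGraph α) (x y z : α) : Prop :=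
  ∃ p : T.Walk x z, p.IsPath ∧ y ∈ p.support

namespace SimpleGraph

variable {α : Type*} {H : SimpleGraph α}

lemma dist_le_dist_add_one_of_adj (e : α) {a b : α} (hab : H.Adj a b) :
    H.dist e b ≤ H.dist e a + 1 := by
  rcases hab.diff_dist_adj (u := e) with h | h | h <;> omega

lemma Walk.exists_mem_support_eq_of_le_of_le (f : α → ℕ)
    (hf : ∀ a b, H.Adj a b → f b ≤ f a + 1) {x y : α} (p : H.Walk x y) {m : ℕ}
    (hxm : f x ≤ m) (hmy : m ≤ f y) : ∃ z ∈ p.support, f z = m := by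
  induction p with
  | nil => exact ⟨_, Walk.start_mem_support _, le_antisymm hxm hmy⟩
  | cons hadj p ih =>
    rcases hxm.eq_or_lt with h | h
    · exact ⟨_, Walk.start_mem_support _, h⟩
    · obtain ⟨z, hz, hzm⟩ := ih (by have := hf _ _ hadj; omega) hmy
      exact ⟨z, List.mem_cons_of_mem _ hz, hzm⟩

lemma ordConnected_image_dist_of_preconnected (e : α) {X : Set α}
    (hX : (H.induce X).Preconnected) : (H.dist e '' X).OrdConnected := by
  refine ⟨?_⟩
  rintro _ ⟨x, hx, rfl⟩ _ ⟨y, hy, rfl⟩ m ⟨hxm, hmy⟩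
  obtain ⟨p⟩ := hX ⟨x, hx⟩ ⟨y, hy⟩
  obtain ⟨z, -, hz⟩ := Walk.exists_mem_support_eq_of_le_of_le (fun z : X => H.dist e z)
    (fun _ _ h => dist_le_dist_add_one_of_adj e h) p hxm hmy
  exact ⟨z, z.2, hz⟩

lemma IsAcyclic.support_subset_of_isPath (hH : H.IsAcyclic) {X : Set α}
    (hX : (H.induce X).Preconnected) {x y : α} {p : H.Walk x y} (hp : p.IsPath) (hx : x ∈ X)
    (hy : y ∈ X) : ∀ z ∈ p.support, z ∈ X := by
  classical
  obtain ⟨q⟩ := hX ⟨x, hx⟩ ⟨y, hy⟩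
  have hqp : (q.map (Embedding.induce X).toHom).bypass = p := congrArg Subtype.val <|
    (hH.subsingleton_path x y).elim ⟨_, Walk.bypass_isPath _⟩ ⟨p, hp⟩
  intro z hz
  have hz' : z ∈ (q.map (Embedding.induce X).toHom).support :=
    Walk.support_bypass_subset_support _ (hqp ▸ hz)
  rw [Walk.support_map] at hz'
  obtain ⟨z', -, rfl⟩ := List.mem_map.mp hz'
  exact z'.2

/-- In a forest, the trace of a subtree on another subtree is again a subtree. -/
lemma IsAcyclic.preconnected_induce_induce (hH : H.IsAcyclic) {P X : Set α}
    (hP : (H.induce P).Preconnected) (hX : (H.induce X).Preconnected) :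
    ((H.induce P).induce {z : P | z.1 ∈ X}).Preconnected := by
  classical
  rintro ⟨x, hxX⟩ ⟨y, hyX⟩
  let p := (hP x y).some.bypass
  have hp : (p.map (Embedding.induce (G := H) P).toHom).IsPath :=
    (Walk.bypass_isPath _).map (Embedding.induce (G := H) P).injective
  have hsupp := hH.support_subset_of_isPath hX hp hxX hyX
  refine ⟨p.induce {z : P | z.1 ∈ X} fun z hz => hsupp _ ?_⟩
  rw [Walk.support_map]
  exact List.mem_map_of_mem hz

lemma Connected.exists_adj_dist_eq (hc : H.Connected) {e x : α} {k : ℕ}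
    (h : H.dist e x = k + 1) : ∃ a, H.Adj x a ∧ H.dist e a = k := by
  obtain ⟨p, -, hp⟩ := hc.exists_path_of_dist x e
  rw [dist_comm, h] at hp
  have hnil : ¬ p.Nil := by
    rw [← Walk.length_eq_zero_iff]; omega
  refine ⟨p.snd, p.adj_snd hnil, le_antisymm ?_ ?_⟩
  · have := dist_le p.tail.reverse
    have := Walk.length_tail_add_one hnil
    rw [Walk.length_reverse] at *
    omega
  · have := dist_le_dist_add_one_of_adj e (p.adj_snd hnil).symm
    omega

lemma IsTree.exists_ncard_neighborSet_le_one [Finite α] (hH : H.IsTree) :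
    ∃ e, (H.neighborSet e).ncard ≤ 1 := by
  classical
  have := Fintype.ofFinite α
  rcases subsingleton_or_nontrivial α with hα | hα
  · obtain ⟨e⟩ := hH.connected.nonempty
    exact ⟨e, Set.ncard_le_one_iff_subsingleton.mpr Set.subsingleton_of_subsingleton⟩
  · obtain ⟨e, he⟩ := hH.exists_vert_degree_one_of_nontrivial
    refine ⟨e, ?_⟩
    rw [← Set.fintypeCard_eq_ncard, card_neighborSet_eq_degree, he]

lemma IsTree.injective_dist_of_ncard_neighborSet_le [Finite α] (hH : H.IsTree)
    (hdeg : ∀ x, (H.neighborSet x).ncard ≤ 2) {e : α} (he : (H.neighborSet e).ncard ≤ 1) :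
    Function.Injective (H.dist e) := by
  suffices ∀ k x y, H.dist e x = k → H.dist e y = k → x = y from
    fun x y hxy => this _ x y rfl hxy.symm
  intro k
  induction k with
  | zero =>
    intro x y hx hy
    rw [hH.connected.dist_eq_zero_iff] at hx hy
    exact hx.symm.trans hy
  | succ k ih =>
    intro x y hx hy
    by_contra hne
    obtain ⟨a, hxa, ha⟩ := hH.connected.exists_adj_dist_eq hx
    obtain ⟨b, hyb, hb⟩ := hH.connected.exists_adj_dist_eq hy
    obtain rfl := ih a b ha hb
    -- the children `x ≠ y` of `a`, with the parent of `a` unless `a = e`, break the degree bound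
    rcases k with _ | k
    · obtain rfl := (hH.connected.dist_eq_zero_iff.mp ha).symm
      have : 1 < (H.neighborSet a).ncard :=
        (Set.one_lt_ncard_iff).mpr ⟨x, y, hxa.symm, hyb.symm, hne⟩
      omega
    · obtain ⟨c, hac, hc⟩ := hH.connected.exists_adj_dist_eq ha
      have : 2 < (H.neighborSet a).ncard := (Set.two_lt_ncard_iff).mpr
        ⟨x, y, c, hxa.symm, hyb.symm, hac, hne, by rintro rfl; omega, by rintro rfl; omega⟩
      have := hdeg a
      omega

end SimpleGraph

section Cliques

variable [Finite V] {G : SimpleGraph V}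

lemma exists_maxCliques_superset {s : Set V} (hs : G.IsClique s) :
    ∃ Q : MaxCliques G, s ⊆ Q.1 := by
  obtain ⟨Q, hsQ, hQ⟩ := (Set.toFinite {t : Set V | G.IsClique t}).exists_le_maximal hs
  exact ⟨⟨Q, hQ.1, fun t ht hQt => le_antisymm hQt (hQ.2 ht hQt)⟩, hsQ⟩

lemma adj_iff_exists_maxCliques_mem {v u w : V} (hu : G.Adj v u) (hw : G.Adj v w)
    (huw : u ≠ w) : G.Adj u w ↔ ∃ Q : MaxCliques G, v ∈ Q.1 ∧ u ∈ Q.1 ∧ w ∈ Q.1 := by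
  refine ⟨fun h => ?_, fun ⟨Q, _, hu, hw⟩ => Q.2.1 hu hw huw⟩
  have hs : G.IsClique {v, u, w} := by
    rw [isClique_insert, isClique_pair]
    exact ⟨fun _ => h, by rintro x (rfl | rfl) - <;> assumption⟩
  obtain ⟨Q, hQ⟩ := exists_maxCliques_superset hs
  exact ⟨Q, hQ (by simp), hQ (by simp), hQ (by simp)⟩

end Cliques

theorem isIntervalGraph_of_ordConnected {G : SimpleGraph V} (I : V → Set ℕ)
    (hfin : ∀ u, (I u).Finite) (hne : ∀ u, (I u).Nonempty) (hconv : ∀ u, (I u).OrdConnected)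
    (hadj : ∀ u w, u ≠ w → (G.Adj u w ↔ (I u ∩ I w).Nonempty)) : IsIntervalGraph G := by
  have hIcc : ∀ u, I u = Set.Icc (sInf (I u)) (sSup (I u)) := fun u =>
    ((hne u).ordConnected_iff_of_bdd (OrderBot.bddBelow _) (hfin u).bddAbove).mp (hconv u)
  refine ⟨fun u => Set.Icc ((sInf (I u) : ℕ) : ℝ) ((sSup (I u) : ℕ) : ℝ),
    fun u => ⟨_, _, ?_, rfl⟩, fun u w huw => ?_⟩
  · have := hne u
    rw [hIcc u, Set.nonempty_Icc] at this
    exact_mod_cast this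
  · rw [hadj u w huw, hIcc u, hIcc w, Set.Icc_inter_Icc, Set.Icc_inter_Icc, Set.nonempty_Icc,
      Set.nonempty_Icc]
    norm_cast

theorem stmt9 [Fintype V] (G : SimpleGraph V) (hG : IsPathGraph G) (v : V) :
    IsIntervalGraph (G.induce (G.neighborSet v)) := by
  obtain ⟨T, hT, hpath⟩ := hG.resolve_left fun h => h.false v
  set P := {Q : MaxCliques G | v ∈ Q.1}
  set H := T.induce P
  have hH : H.IsTree := ⟨(hpath v).1, hT.isAcyclic.induce P⟩
  obtain ⟨E, hE⟩ := hH.exists_ncard_neighborSet_le_one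
  have hinj := hH.injective_dist_of_ncard_neighborSet_le (hpath v).2 hE
  refine isIntervalGraph_of_ordConnected (fun u => H.dist E '' {Q : P | u.1 ∈ Q.1.1})
    (fun _ => Set.toFinite _) (fun u => ?_) (fun u => ?_) (fun u w huw => ?_)
  · obtain ⟨Q, hQ⟩ := exists_maxCliques_superset (isClique_pair.mpr fun _ => u.2)
    exact (Set.nonempty_of_mem (x := (⟨Q, hQ (by simp)⟩ : P)) (hQ (by simp))).image _
  · exact ordConnected_image_dist_of_preconnected E
      (hT.isAcyclic.preconnected_induce_induce (hpath v).1.preconnected (hpath u).1.preconnected)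
  · rw [← Set.image_inter hinj, Set.image_nonempty, induce_adj,
      adj_iff_exists_maxCliques_mem u.2 w.2 (Subtype.coe_ne_coe.mpr huw)]
    exact ⟨fun ⟨Q, hv, hu, hw⟩ => ⟨⟨Q, hv⟩, hu, hw⟩, fun ⟨Q, hu, hw⟩ => ⟨Q, Q.2, hu, hw⟩⟩
end

section
/- A hole (chordless cycle of length n ≥ 4) is not a path graph, and every proper induced subgraph of a hole is a path graph. -/
open SimpleGraph

variable {V : Type*}

/-!
Every maximal clique of a hole is an edge `{i, i + 1}`, and the only maximal cliques containing
`i + 1` are `{i, i + 1}` and `{i + 1, i + 2}`. In a clique path tree these two must therefore be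
adjacent, so the tree would contain a copy of the hole.

Deleting a vertex `k` cuts the hole open: numbering the remaining vertices along the cycle,
starting after `k`, adjacent vertices get consecutive numbers. In such a graph a maximal clique is
determined by its least vertex, and a vertex `v` only lies in maximal cliques whose least vertex is
`v` or its predecessor. Joining the maximal cliques into a path, ordered by their least vertex,
therefore gives a clique path tree.
-/

section Trees

theorem isAcyclic_hasse {α : Type*} [LinearOrder α] : (hasse α).IsAcyclic := by
  suffices h : ∀ ⦃a b : α⦄, a ⋖ b → ∀ p : (hasse α).Walk a b, s(a, b) ∈ p.edges by
    refine isAcyclic_iff_forall_adj_isBridge.mpr fun a b hab => ?_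
    refine isBridge_iff_forall_walk_mem_edges.mpr fun p => ?_
    rcases hasse_adj.mp hab with hab | hba
    · exact h hab p
    · simpa [Sym2.eq_swap] using h hba p.reverse
  intro a b hab p
  -- the walk has to leave the down-set of `a`, and only the edge `a ⋖ b` leaves it
  obtain ⟨d, hd, hfst, hsnd⟩ := p.exists_boundary_dart {x | x ≤ a} le_rfl (not_le.mpr hab.lt)
  change d.fst ≤ a at hfst
  replace hsnd : a < d.snd := not_le.mp hsnd
  rcases hasse_adj.mp d.adj with hcov | hcov
  · have hfst_eq : d.fst = a := le_antisymm hfst (hcov.le_of_lt hsnd)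
    have hsnd_eq : d.snd = b := (hfst_eq ▸ hcov).unique_right hab
    have : d.edge = s(a, b) := by rw [Dart.edge, hfst_eq, hsnd_eq]
    exact this ▸ List.mem_map_of_mem hd
  · exact absurd (hcov.lt.trans_le hfst) hsnd.not_gt

theorem pathGraph_isTree (n : ℕ) : (pathGraph (n + 1)).IsTree :=
  ⟨pathGraph_connected n, isAcyclic_hasse⟩

theorem exists_isTree_adj_of_succ {α : Type*} [Finite α] [Nonempty α] (key : α → ℕ)
    (hkey : Function.Injective key) :
    ∃ T : SimpleGraph α, T.IsTree ∧ ∀ a b, key b = key a + 1 → T.Adj a b := by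
  have := Fintype.ofFinite α
  obtain ⟨k, hk⟩ := Nat.exists_eq_succ_of_ne_zero (Fintype.card_ne_zero (α := Set.range key))
  let o := (Fintype.orderIsoFinOfCardEq _ hk).symm
  let e : α ≃ Fin (k + 1) := (Equiv.ofInjective key hkey).trans o.toEquiv
  refine ⟨(pathGraph (k + 1)).comap e, (Iso.comap e _).isTree_iff.mpr (pathGraph_isTree k),
    fun a b hab => hasse_adj.mpr (Or.inl ((apply_covBy_apply_iff o).mpr ⟨?_, fun c h₁ h₂ => ?_⟩))⟩
  · exact Subtype.mk_lt_mk.mpr (by simp [hab])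
  · have h₁ : key a < c.1 := h₁
    have h₂ : c.1 < key b := h₂
    omega

end Trees

section InducedPaths

variable {α : Type*} {T : SimpleGraph α}

theorem inducesPath_of_pairwise_adj (hT : T.IsAcyclic) {X : Set α} (hne : X.Nonempty)
    (hX : X.Pairwise T.Adj) : InducesPath T X := by
  classical
  have := hne.to_subtype
  refine ⟨⟨fun x y => ?_⟩, fun x => ?_⟩
  · by_cases hxy : x = y
    · exact hxy ▸ .rfl
    · exact Adj.reachable (G := T.induce X) (hX x.2 y.2 (Subtype.coe_ne_coe.mpr hxy))
  · -- two neighbours of `x` would be adjacent to each other, giving a triangle in `T`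
    have hsub : ((T.induce X).neighborSet x).Subsingleton := fun y hy z hz => by
      by_contra hyz
      exact hT.cliqueFree le_rfl {x.1, y.1, z.1} (is3Clique_triple_iff.mpr
        ⟨hy, hz, hX y.2 z.2 (Subtype.coe_ne_coe.mpr hyz)⟩)
    have := hsub.finite.to_subtype
    exact (Set.ncard_le_one_iff_subsingleton.mpr hsub).trans one_le_two

theorem adj_of_connected_induce_pair {A B : α} (hAB : A ≠ B)
    (h : (T.induce {A, B}).Connected) : T.Adj A B := by
  obtain ⟨p⟩ := h.preconnected ⟨A, .inl rfl⟩ ⟨B, .inr rfl⟩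
  obtain ⟨d, -, hfst, hsnd⟩ := p.exists_boundary_dart {⟨A, .inl rfl⟩} rfl
    (by simpa [Subtype.ext_iff] using hAB.symm)
  have hfst : d.fst.1 = A := congrArg Subtype.val hfst
  have hsnd : d.snd.1 = B := d.snd.2.resolve_left fun h => hsnd (Subtype.ext h)
  have hd : T.Adj d.fst.1 d.snd.1 := d.adj
  rwa [hfst, hsnd] at hd

end InducedPaths

section MaxCliques

variable {G : SimpleGraph V}

theorem IsMaxClique.nonempty [Nonempty V] {Q : Set V} (hQ : IsMaxClique G Q) : Q.Nonempty := by
  obtain ⟨v⟩ := ‹Nonempty V›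
  rw [Set.nonempty_iff_ne_empty]
  rintro rfl
  exact Set.singleton_ne_empty v (hQ.2 {v} (isClique_singleton v) (Set.empty_subset _)).symm

theorem exists_isMaxClique_mem [Finite V] (v : V) : ∃ Q, IsMaxClique G Q ∧ v ∈ Q := by
  obtain ⟨Q, hvQ, hQ⟩ := Finite.exists_le_maximal (isClique_singleton (G := G) v)
  exact ⟨Q, ⟨hQ.prop, fun t ht hQt => hQt.antisymm (hQ.2 ht hQt)⟩, hvQ rfl⟩

theorem isMaxClique_pair {a b : V} (hab : G.Adj a b)
    (htri : ∀ c, G.Adj a c → G.Adj b c → False) : IsMaxClique G {a, b} := by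
  refine ⟨isClique_pair.mpr fun _ => hab, fun t ht hsub => hsub.antisymm fun c hc => ?_⟩
  by_contra hc'
  simp only [Set.mem_insert_iff, Set.mem_singleton_iff, not_or] at hc'
  exact htri c (ht (hsub (.inl rfl)) hc (Ne.symm hc'.1)) (ht (hsub (.inr rfl)) hc (Ne.symm hc'.2))

end MaxCliques

section LinearForest

variable {G : SimpleGraph V} {f : V → ℕ}

theorem SimpleGraph.IsClique.eq_or_adj_of_isMinOn
    (hG : ∀ ⦃x y⦄, G.Adj x y → f x + 1 = f y ∨ f y + 1 = f x) {Q : Set V} (hQ : G.IsClique Q)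
    {a x : V} (ha : a ∈ Q) (hmin : IsMinOn f Q a) (hx : x ∈ Q) :
    x = a ∨ G.Adj a x ∧ f x = f a + 1 := by
  by_cases hxa : x = a
  · exact .inl hxa
  have hax := hQ ha hx (Ne.symm hxa)
  have := isMinOn_iff.mp hmin x hx
  exact .inr ⟨hax, by rcases hG hax with h | h <;> omega⟩

theorem isClique_union_of_isMinOn (hf : Function.Injective f)
    (hG : ∀ ⦃x y⦄, G.Adj x y → f x + 1 = f y ∨ f y + 1 = f x) {Q R : Set V}
    (hQ : G.IsClique Q) (hR : G.IsClique R) {a : V} (haQ : a ∈ Q) (haR : a ∈ R)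
    (hminQ : IsMinOn f Q a) (hminR : IsMinOn f R a) : G.IsClique (Q ∪ R) := by
  have key : ∀ x ∈ Q ∪ R, x = a ∨ G.Adj a x ∧ f x = f a + 1 := by
    rintro x (hx | hx)
    · exact hQ.eq_or_adj_of_isMinOn hG haQ hminQ hx
    · exact hR.eq_or_adj_of_isMinOn hG haR hminR hx
  intro x hx y hy hxy
  rcases key x hx with rfl | ⟨-, hfx⟩ <;> rcases key y hy with rfl | ⟨hy, hfy⟩
  · exact absurd rfl hxy
  · exact hy
  · exact (key x hx).resolve_left hxy |>.1.symm
  · exact absurd (hf (hfx.trans hfy.symm)) hxy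

theorem IsMaxClique.eq_of_isMinOn (hf : Function.Injective f)
    (hG : ∀ ⦃x y⦄, G.Adj x y → f x + 1 = f y ∨ f y + 1 = f x) {Q R : Set V}
    (hQ : IsMaxClique G Q) (hR : IsMaxClique G R) {a : V} (haQ : a ∈ Q) (haR : a ∈ R)
    (hminQ : IsMinOn f Q a) (hminR : IsMinOn f R a) : Q = R := by
  have hU := isClique_union_of_isMinOn hf hG hQ.1 hR.1 haQ haR hminQ hminR
  exact (hQ.2 _ hU Set.subset_union_left).trans (hR.2 _ hU Set.subset_union_right).symm

theorem isPathGraph_of_adj_succ [Finite V] (hf : Function.Injective f)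
    (hG : ∀ ⦃x y⦄, G.Adj x y → f x + 1 = f y ∨ f y + 1 = f x) : IsPathGraph G := by
  rcases isEmpty_or_nonempty V with hV | hV
  · exact .inl hV
  right
  have hmin (Q : MaxCliques G) : ∃ a ∈ Q.1, IsMinOn f Q.1 a := by
    simpa only [isMinOn_iff] using Set.exists_min_image Q.1 f Q.1.toFinite Q.2.nonempty
  choose lo hlo_mem hlo_min using hmin
  have hkey : Function.Injective (f ∘ lo) := fun Q R h =>
    Subtype.ext <| Q.2.eq_of_isMinOn hf hG R.2 (hlo_mem Q) (hf h ▸ hlo_mem R) (hlo_min Q)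
      (hf h ▸ hlo_min R)
  have hkey_mem : ∀ v (Q : MaxCliques G), v ∈ Q.1 → f (lo Q) = f v ∨ f (lo Q) + 1 = f v :=
    fun v Q hv => by
      rcases Q.2.1.eq_or_adj_of_isMinOn hG (hlo_mem Q) (hlo_min Q) hv with rfl | ⟨-, h⟩
      · exact .inl rfl
      · exact .inr h.symm
  obtain ⟨Q₀, hQ₀, -⟩ := exists_isMaxClique_mem (G := G) hV.some
  have : Nonempty (MaxCliques G) := ⟨⟨Q₀, hQ₀⟩⟩
  obtain ⟨T, hT, hTadj⟩ := exists_isTree_adj_of_succ (f ∘ lo) hkey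
  refine ⟨T, hT, fun v => inducesPath_of_pairwise_adj hT.isAcyclic ?_ ?_⟩
  · obtain ⟨Q, hQ, hvQ⟩ := exists_isMaxClique_mem (G := G) v
    exact ⟨⟨Q, hQ⟩, hvQ⟩
  · intro Q hQ R hR hQR
    have hne : f (lo Q) ≠ f (lo R) := fun h => hQR (hkey h)
    rcases hkey_mem v Q hQ with hQ' | hQ' <;> rcases hkey_mem v R hR with hR' | hR'
    · exact absurd (hQ'.trans hR'.symm) hne
    · exact (hTadj R Q (by simp; omega)).symm
    · exact hTadj Q R (by simp; omega)
    · exact absurd (by omega) hne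

end LinearForest

section Cycles

theorem cycleGraph_adj_val {n : ℕ} {u v : Fin n} (h : (cycleGraph n).Adj u v) :
    u.val + 1 = v.val ∨ v.val + 1 = u.val ∨ (u.val + 1 = n ∧ v.val = 0) ∨
      (v.val + 1 = n ∧ u.val = 0) := by
  have hu := u.isLt
  have hv := v.isLt
  rcases cycleGraph_adj'.mp h with h' | h' <;> rcases lt_or_gt_of_ne h.ne with huv | huv
  · rw [Fin.coe_sub_iff_lt.mpr huv] at h'; omega
  · rw [Fin.coe_sub_iff_le.mpr huv.le] at h'; omega
  · rw [Fin.coe_sub_iff_le.mpr huv.le] at h'; omega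
  · rw [Fin.coe_sub_iff_lt.mpr huv] at h'; omega

theorem isPathGraph_induce_cycleGraph {n : ℕ} {s : Set (Fin n)} (hs : s ≠ Set.univ) :
    IsPathGraph ((cycleGraph n).induce s) := by
  obtain ⟨k, hk⟩ := (Set.ne_univ_iff_exists_notMem s).mp hs
  -- cut the cycle open at the missing vertex `k`
  let f : s → ℕ := fun x => if x.1.val < k.val then x.1.val + n else x.1.val
  have hxk : ∀ x : s, x.1.val ≠ k.val := fun x h => hk (Fin.ext h ▸ x.2)
  refine isPathGraph_of_adj_succ (f := f) (fun x y hxy => ?_) (fun x y hxy => ?_)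
  · have := x.1.isLt; have := y.1.isLt
    exact Subtype.ext (Fin.ext (by simp only [f] at hxy; split_ifs at hxy <;> omega))
  · have := hxk x; have := hxk y; have := x.1.isLt; have := y.1.isLt
    have := cycleGraph_adj_val (induce_adj.mp hxy)
    simp only [f]; split_ifs <;> omega

end Cycles

section Holes

theorem cycleGraph_cliqueFree_three {n : ℕ} (hn : 4 ≤ n) : (cycleGraph n).CliqueFree 3 := by
  intro t ht
  obtain ⟨a, b, c, hab, hac, hbc, -⟩ := is3Clique_iff.mp ht
  have := cycleGraph_adj_val hab
  have := cycleGraph_adj_val hac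
  have := cycleGraph_adj_val hbc
  omega

variable {m : ℕ}

theorem cycleGraph_adj_iff_eq_add_one {u v : Fin (m + 2)} :
    (cycleGraph (m + 2)).Adj u v ↔ u = v + 1 ∨ v = u + 1 := by
  simp only [cycleGraph_adj, sub_eq_iff_eq_add, add_comm (1 : Fin (m + 2))]

theorem isMaxClique_cycleGraph_pair (i : Fin (m + 4)) :
    IsMaxClique (cycleGraph (m + 4)) {i, i + 1} :=
  isMaxClique_pair (cycleGraph_adj_iff_eq_add_one.mpr (.inr rfl)) fun c h₁ h₂ =>
    cycleGraph_cliqueFree_three (by omega) {i, i + 1, c}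
      (is3Clique_triple_iff.mpr ⟨cycleGraph_adj_iff_eq_add_one.mpr (.inr rfl), h₁, h₂⟩)

theorem IsMaxClique.eq_pair_of_mem_cycleGraph {Q : Set (Fin (m + 4))}
    (hQ : IsMaxClique (cycleGraph (m + 4)) Q) {v : Fin (m + 4)} (hv : v ∈ Q) :
    Q = {v - 1, v} ∨ Q = {v, v + 1} := by
  by_cases hup : v + 1 ∈ Q
  · refine .inr (hQ.2 _ (isMaxClique_cycleGraph_pair v).1 fun x hx => ?_)
    by_contra hx'
    simp only [Set.mem_insert_iff, Set.mem_singleton_iff, not_or] at hx'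
    exact cycleGraph_cliqueFree_three (by omega) {v, x, v + 1} (is3Clique_triple_iff.mpr
      ⟨hQ.1 hv hx (Ne.symm hx'.1), cycleGraph_adj_iff_eq_add_one.mpr (.inr rfl),
        hQ.1 hx hup hx'.2⟩)
  · have hpair := isMaxClique_cycleGraph_pair (v - 1)
    rw [sub_add_cancel] at hpair
    refine .inl (hQ.2 _ hpair.1 fun x hx => ?_)
    by_cases hxv : x = v
    · exact .inr hxv
    rcases cycleGraph_adj_iff_eq_add_one.mp (hQ.1 hv hx (Ne.symm hxv)) with h | h
    · exact .inl (eq_sub_of_add_eq h.symm)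
    · exact absurd (h ▸ hx) hup

theorem not_isPathGraph_cycleGraph_add_four : ¬ IsPathGraph (cycleGraph (m + 4)) := by
  rintro (hempty | ⟨T, hT, hpath⟩)
  · exact hempty.false 0
  let E : Fin (m + 4) → MaxCliques (cycleGraph (m + 4)) :=
    fun i => ⟨{i, i + 1}, isMaxClique_cycleGraph_pair i⟩
  have hE : Function.Injective E := by
    intro i j hij
    have hset : ({i, i + 1} : Set (Fin (m + 4))) = {j, j + 1} := congrArg Subtype.val hij
    have hi : i ∈ ({j, j + 1} : Set _) := hset ▸ .inl rfl
    have hj : j ∈ ({i, i + 1} : Set _) := hset.symm ▸ .inl rfl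
    rcases hi with hi | hi
    · exact hi
    rcases hj with hj | hj
    · exact hj.symm
    rw [Set.mem_singleton_iff] at hi hj
    rw [hj, add_assoc, left_eq_add] at hi
    simp [Fin.ext_iff, Fin.val_add, Nat.mod_eq_of_lt (show 2 < m + 4 by omega)] at hi
  have hcliques : ∀ i, {Q : MaxCliques (cycleGraph (m + 4)) | i + 1 ∈ Q.1} = {E i, E (i + 1)} := by
    intro i
    ext Q
    simp only [Set.mem_insert_iff, Set.mem_singleton_iff, Subtype.ext_iff]
    constructor
    · intro hQ
      simpa using Q.2.eq_pair_of_mem_cycleGraph hQ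
    · rintro (h | h) <;> simp [h, E]
  have hadj : ∀ i, T.Adj (E i) (E (i + 1)) := fun i =>
    adj_of_connected_induce_pair (hE.ne (cycleGraph_adj_iff_eq_add_one.mpr (.inr rfl)).ne)
      (hcliques i ▸ (hpath (i + 1)).1)
  let φ : cycleGraph (m + 4) →g T := ⟨E, fun h => by
    rcases cycleGraph_adj_iff_eq_add_one.mp h with rfl | rfl
    · exact (hadj _).symm
    · exact hadj _⟩
  exact isAcyclic_iff_free_cycleGraph.mp hT.isAcyclic (m + 4) (by omega) ⟨φ.toCopy hE⟩

end Holes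

theorem stmt11 (n : ℕ) (hn : 4 ≤ n) :
    ¬ IsPathGraph (SimpleGraph.cycleGraph n) ∧
      ∀ s : Set (Fin n), s ≠ Set.univ → IsPathGraph ((SimpleGraph.cycleGraph n).induce s) := by
  obtain ⟨m, rfl⟩ := Nat.exists_eq_add_of_le' hn
  exact ⟨not_isPathGraph_cycleGraph_add_four, fun s hs => isPathGraph_induce_cycleGraph hs⟩
end

section
/- Let G be a chordal graph, v a simplicial vertex, Q_v = N(v) ∪ {v}, and S_v the set of vertices of Q_v having a neighbor outside Q_v. If S_v is a maximal clique of G \ v and G \ v is a path graph, then G is a path graph. -/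
open SimpleGraph

variable {V : Type*}

section AuxStmt15

variable {α β : Type*}

lemma aux_isAcyclic_of_iso {T : SimpleGraph α} {T' : SimpleGraph β}
    (f : T ≃g T') (h : T'.IsAcyclic) : T.IsAcyclic := by
  intro u c hc
  exact h (c.map f.toHom)
    ((SimpleGraph.Walk.map_isCycle_iff_of_injective f.toEquiv.injective).mpr hc)

lemma aux_isTree_of_iso {T : SimpleGraph α} {T' : SimpleGraph β}
    (f : T ≃g T') (h : T'.IsTree) : T.IsTree :=
  ⟨f.connected_iff.mpr h.isConnected, aux_isAcyclic_of_iso f h.IsAcyclic⟩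

lemma aux_inducesPath_subsingleton (T : SimpleGraph α) {X : Set α} (hne : X.Nonempty)
    (hss : X.Subsingleton) : InducesPath T X := by
  constructor
  · haveI : Nonempty X := ⟨⟨hne.choose, hne.choose_spec⟩⟩
    exact ⟨fun a b => by
      have : a = b := Subtype.ext (hss a.2 b.2)
      exact this ▸ SimpleGraph.Reachable.refl a⟩
  · intro x
    have hempty : (T.induce X).neighborSet x = ∅ := by
      ext y
      simp only [SimpleGraph.mem_neighborSet, Set.mem_empty_iff_false, iff_false]
      intro h
      exact (T.induce X).irrefl (Subtype.ext (hss x.2 y.2) ▸ h)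
    simp [hempty]

/-- Transfer `InducesPath` along a graph isomorphism. -/
lemma aux_inducesPath_transfer {T : SimpleGraph α} {T' : SimpleGraph β}
    (f : T ≃g T') (X : Set α) (X' : Set β) (hX : ∀ a, a ∈ X ↔ f a ∈ X')
    (h : InducesPath T' X') : InducesPath T X := by
  have g : T.induce X ≃g T'.induce X' := by
    refine ⟨f.toEquiv.subtypeEquiv hX, ?_⟩
    intro a b
    simp only [Equiv.subtypeEquiv_apply, SimpleGraph.comap_adj, Function.Embedding.coe_subtype]
    exact f.map_rel_iff
  constructor
  · exact g.connected_iff.mpr h.1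
  · intro x
    have hcard : ((T.induce X).neighborSet x).ncard =
        ((T'.induce X').neighborSet (g x)).ncard := by
      rw [← Nat.card_coe_set_eq, ← Nat.card_coe_set_eq]
      exact Nat.card_congr (g.mapNeighborSet x)
    rw [hcard]
    exact h.2 (g x)

end AuxStmt15

theorem stmt15 [Fintype V] (G : SimpleGraph V) (hG : Chordal G) (v : V)
    (hv : IsSimplicial G v)
    (hSv : IsMaxClique (G.induce {x | x ≠ v}) (Subtype.val ⁻¹' Sv G v))
    (hpath : IsPathGraph (G.induce {x | x ≠ v})) :
    IsPathGraph G := by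
  classical
  set S : Set V := {x | x ≠ v} with hSdef
  -- basic facts about Qv and Sv
  have hvQ : v ∈ Qv G v := Set.mem_insert _ _
  have hNQ : G.neighborSet v ⊆ Qv G v := Set.subset_insert _ _
  have hNvS : G.neighborSet v ⊆ S := fun x hx => (G.ne_of_adj hx).symm
  have hQvclique : G.IsClique (Qv G v) := by
    intro a ha b hb hab
    rcases ha with rfl | ha
    · rcases hb with rfl | hb
      · exact absurd rfl hab
      · exact hb
    · rcases hb with rfl | hb
      · exact (G.adj_symm ha)
      · exact hv ha hb hab
  have hmemQv : ∀ x, x ∈ Qv G v → x ≠ v → x ∈ G.neighborSet v := by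
    intro x hx hxv
    rcases hx with rfl | hx
    · exact absurd rfl hxv
    · exact hx
  have hQvmax : IsMaxClique G (Qv G v) := by
    refine ⟨hQvclique, fun t ht hsub => Set.Subset.antisymm hsub ?_⟩
    intro x hx
    by_cases hxv : x = v
    · exact hxv ▸ hvQ
    · exact hNQ (ht (hsub hvQ) hx (fun h => hxv h.symm))
  have hvnS : v ∉ Sv G v := by
    rintro ⟨-, y, hy, hadj⟩
    exact hy (hNQ hadj)
  have hSvsub : Sv G v ⊆ G.neighborSet v := by
    intro x hx
    have hxv : x ≠ v := fun h => hvnS (h ▸ hx)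
    exact hmemQv x hx.1 hxv
  -- the induced graph
  have upClique : ∀ {M : Set S}, (G.induce S).IsClique M → G.IsClique (Subtype.val '' M) := by
    rintro M hM a ⟨a', ha', rfl⟩ b ⟨b', hb', rfl⟩ hab
    exact hM ha' hb' (fun h => hab (congrArg Subtype.val h))
  have downClique : ∀ {A : Set V}, G.IsClique A → (G.induce S).IsClique (Subtype.val ⁻¹' A) := by
    intro A hA a ha b hb hab
    exact hA ha hb (fun h => hab (Subtype.ext h))
  have up_down : ∀ {A : Set V}, A ⊆ S → Subtype.val '' (Subtype.val ⁻¹' A : Set S) = A := by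
    intro A hA
    rw [Subtype.image_preimage_coe]
    exact Set.inter_eq_right.mpr hA
  have down_up : ∀ (M : Set S), Subtype.val ⁻¹' (Subtype.val '' M) = M :=
    fun M => Set.preimage_image_eq M Subtype.coe_injective
  -- Sv = N(v)
  have hSvN : Sv G v = G.neighborSet v := by
    refine Set.Subset.antisymm hSvsub ?_
    have ht : (G.induce S).IsClique (Subtype.val ⁻¹' G.neighborSet v) := by
      intro a ha b hb hab
      exact hv ha hb (fun h => hab (Subtype.ext h))
    have hsub : (Subtype.val ⁻¹' Sv G v : Set S) ⊆ Subtype.val ⁻¹' G.neighborSet v :=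
      fun a ha => hSvsub ha
    have heq := hSv.2 _ ht hsub
    intro x hx
    have hxS : x ∈ S := hNvS hx
    have : (⟨x, hxS⟩ : S) ∈ (Subtype.val ⁻¹' Sv G v : Set S) := heq ▸ hx
    exact this
  have hNvmax : IsMaxClique (G.induce S) (Subtype.val ⁻¹' G.neighborSet v) := hSvN ▸ hSv
  -- unique max clique containing v
  have memQv_unique : ∀ Q : Set V, IsMaxClique G Q → v ∈ Q → Q = Qv G v := by
    intro Q hQ hvQ'
    have hsub : Q ⊆ Qv G v := by
      intro x hx
      by_cases hxv : x = v
      · exact hxv ▸ hvQ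
      · exact hNQ (hQ.1 hvQ' hx (fun h => hxv h.symm))
    exact hQ.2 _ hQvclique hsub
  -- case split on hpath
  rcases hpath with hempty | ⟨T', hT'⟩
  · -- degenerate: V = {v}
    right
    have hall : ∀ x : V, x = v := fun x => by
      by_contra h
      exact hempty.false (⟨x, h⟩ : S)
    have hclique : G.IsClique ({v} : Set V) := G.isClique_singleton v
    have hvmax : IsMaxClique G {v} :=
      ⟨hclique, fun t ht hsub => Set.Subset.antisymm hsub
        (fun x hx => Set.mem_singleton_iff.mpr (hall x))⟩
    have huniq : ∀ Q : MaxCliques G, Q = (⟨{v}, hvmax⟩ : MaxCliques G) := by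
      intro Q
      exact Subtype.ext
        (Q.2.2 {v} hclique (fun y hy => Set.mem_singleton_iff.mpr (hall y)))
    refine ⟨⊥, ⟨?_, ?_⟩, ?_⟩
    · haveI : Nonempty (MaxCliques G) := ⟨⟨{v}, hvmax⟩⟩
      refine ⟨fun a b => ?_⟩
      rw [huniq a, huniq b]
    · intro u c hc
      cases c with
      | nil => exact hc.ne_nil rfl
      | cons h _ => exact h
    · intro x
      exact aux_inducesPath_subsingleton _
        ⟨⟨{v}, hvmax⟩, Set.mem_singleton_iff.mpr (hall x)⟩
        (fun a _ b _ => (huniq a).trans (huniq b).symm)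
  · -- main case
    right
    -- max clique correspondences
    have maxUp : ∀ M : Set S, IsMaxClique (G.induce S) M →
        Subtype.val '' M ≠ G.neighborSet v → IsMaxClique G (Subtype.val '' M) := by
      intro M hM hne
      refine ⟨upClique hM.1, fun t ht hsub => ?_⟩
      have hvt : v ∉ t := by
        intro hvt
        have hMN : Subtype.val '' M ⊆ G.neighborSet v := by
          rintro x ⟨x', hx', rfl⟩
          exact G.adj_symm (ht (hsub ⟨x', hx', rfl⟩) hvt x'.2)
        have : M ⊆ Subtype.val ⁻¹' G.neighborSet v := by
          intro a ha
          exact hMN ⟨a, ha, rfl⟩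
        have := hM.2 _ (downClique hv) this
        exact hne (by rw [this, up_down hNvS])
      have htS : t ⊆ S := fun x hx => fun h => hvt (h ▸ hx)
      have hsub' : M ⊆ Subtype.val ⁻¹' t := by
        rw [← down_up M]
        exact fun a ha => hsub ha
      have := hM.2 _ (downClique ht) hsub'
      rw [this, up_down htS]
    have maxDown : ∀ Q : Set V, IsMaxClique G Q → v ∉ Q →
        IsMaxClique (G.induce S) (Subtype.val ⁻¹' Q) := by
      intro Q hQ hvQ'
      have hQS : Q ⊆ S := fun x hx => fun h => hvQ' (h ▸ hx)
      refine ⟨downClique hQ.1, fun t ht hsub => ?_⟩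
      have hsub2 : Q ⊆ Subtype.val '' t := by
        rw [← up_down hQS]
        exact Set.image_mono hsub
      have := hQ.2 _ (upClique ht) hsub2
      rw [this, down_up]
    have ne_Nv : ∀ Q : Set V, IsMaxClique G Q → v ∉ Q → Q ≠ G.neighborSet v := by
      intro Q hQ hvQ' h
      have : Q = Qv G v := hQ.2 _ hQvclique (h ▸ hNQ)
      exact hvQ' (this ▸ hvQ)
    -- the equivalence of maximal cliques
    have QS : ∀ Q : Set V, v ∉ Q → Q ⊆ S := fun Q h x hx hh => h (hh ▸ hx)
    let eto : MaxCliques (G.induce S) → MaxCliques G := fun M =>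
      if h : Subtype.val '' M.1 = G.neighborSet v then ⟨Qv G v, hQvmax⟩
      else ⟨Subtype.val '' M.1, maxUp _ M.2 h⟩
    let einv : MaxCliques G → MaxCliques (G.induce S) := fun Q =>
      if h : v ∈ Q.1 then ⟨Subtype.val ⁻¹' G.neighborSet v, hNvmax⟩
      else ⟨Subtype.val ⁻¹' Q.1, maxDown _ Q.2 h⟩
    have hli : Function.LeftInverse einv eto := by
      rintro ⟨M, hM⟩
      by_cases h : Subtype.val '' M = G.neighborSet v
      · have h1 : eto ⟨M, hM⟩ = ⟨Qv G v, hQvmax⟩ := dif_pos h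
        have h2 : einv ⟨Qv G v, hQvmax⟩ = ⟨Subtype.val ⁻¹' G.neighborSet v, hNvmax⟩ :=
          dif_pos hvQ
        rw [h1, h2]
        exact Subtype.ext (show (Subtype.val ⁻¹' G.neighborSet v : Set S) = M by
          rw [← h, down_up])
      · have h1 : eto ⟨M, hM⟩ = ⟨Subtype.val '' M, maxUp _ hM h⟩ := dif_neg h
        have hnv : v ∉ Subtype.val '' M := by rintro ⟨x, -, hx⟩; exact x.2 hx
        have h2 : einv ⟨Subtype.val '' M, maxUp _ hM h⟩ =
            ⟨Subtype.val ⁻¹' (Subtype.val '' M), maxDown _ (maxUp _ hM h) hnv⟩ := dif_neg hnv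
        rw [h1, h2]
        exact Subtype.ext (down_up M)
    have hri : Function.RightInverse einv eto := by
      rintro ⟨Q, hQ⟩
      by_cases h : v ∈ Q
      · have h1 : einv ⟨Q, hQ⟩ = ⟨Subtype.val ⁻¹' G.neighborSet v, hNvmax⟩ := dif_pos h
        have h2 : eto ⟨Subtype.val ⁻¹' G.neighborSet v, hNvmax⟩ = ⟨Qv G v, hQvmax⟩ :=
          dif_pos (up_down hNvS)
        rw [h1, h2]
        exact Subtype.ext (memQv_unique Q hQ h).symm
      · have h1 : einv ⟨Q, hQ⟩ = ⟨Subtype.val ⁻¹' Q, maxDown _ hQ h⟩ := dif_neg h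
        have hne : Subtype.val '' (Subtype.val ⁻¹' Q : Set S) ≠ G.neighborSet v := by
          rw [up_down (QS Q h)]; exact ne_Nv Q hQ h
        have h2 : eto ⟨Subtype.val ⁻¹' Q, maxDown _ hQ h⟩ =
            ⟨Subtype.val '' (Subtype.val ⁻¹' Q : Set S), maxUp _ (maxDown _ hQ h) hne⟩ :=
          dif_neg hne
        rw [h1, h2]
        exact Subtype.ext (up_down (QS Q h))
    let e : MaxCliques (G.induce S) ≃ MaxCliques G := ⟨eto, einv, hli, hri⟩
    have he_symm : ∀ Q : MaxCliques G,
        (e.symm Q).1 = if v ∈ Q.1 then Subtype.val ⁻¹' G.neighborSet v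
          else (Subtype.val ⁻¹' Q.1 : Set S) := by
      rintro ⟨Q, hQ⟩
      by_cases h : v ∈ Q
      · have h1 : e.symm ⟨Q, hQ⟩ = ⟨Subtype.val ⁻¹' G.neighborSet v, hNvmax⟩ := dif_pos h
        rw [h1, if_pos h]
      · have h1 : e.symm ⟨Q, hQ⟩ = ⟨Subtype.val ⁻¹' Q, maxDown _ hQ h⟩ := dif_neg h
        rw [h1, if_neg h]
    let T : SimpleGraph (MaxCliques G) := T'.comap e.symm.toEmbedding
    let φ : T ≃g T' := SimpleGraph.Iso.comap e.symm T'
    refine ⟨T, aux_isTree_of_iso φ hT'.1, fun x => ?_⟩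
    by_cases hxv : x = v
    · subst hxv
      refine aux_inducesPath_subsingleton _ ⟨⟨Qv G x, hQvmax⟩, hvQ⟩ ?_
      rintro Q hQ R hR
      exact Subtype.ext ((memQv_unique Q.1 Q.2 hQ).trans (memQv_unique R.1 R.2 hR).symm)
    · refine aux_inducesPath_transfer φ _ {M : MaxCliques (G.induce S) | (⟨x, hxv⟩ : S) ∈ M.1}
        ?_ (hT'.2 ⟨x, hxv⟩)
      intro Q
      show x ∈ Q.1 ↔ (⟨x, hxv⟩ : S) ∈ (e.symm Q).1
      rw [he_symm Q]
      by_cases h : v ∈ Q.1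
      · rw [if_pos h]
        have hQQv : Q.1 = Qv G v := memQv_unique Q.1 Q.2 h
        constructor
        · intro hx
          exact hmemQv x (hQQv ▸ hx) hxv
        · intro hx
          rw [hQQv]
          exact hNQ hx
      · rw [if_neg h]
        exact Iff.rfl
end

section
/- Let G be a chordal graph with clique tree T, let v be a simplicial vertex with Q_v = N(v) ∪ {v} and S_v = Q_v ∩ N(V \ Q_v), and suppose S_v is nonempty and S_v is strictly contained in some maximal clique Q' ≠ Q_v. Then S_v is a minimal separator of G. -/
open SimpleGraph

variable {V : Type*}

theorem stmt16 [Fintype V] (G : SimpleGraph V) (hG : Chordal G) (v : V)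
    (hv : IsSimplicial G v) (hne : (Sv G v).Nonempty)
    (hQ : ∃ Q' : Set V, IsMaxClique G Q' ∧ Q' ≠ Qv G v ∧ Sv G v ⊂ Q') :
    IsMinSeparator G (Sv G v) := by
  obtain ⟨Q', hQ'max, hQ'ne, hSsub⟩ := hQ
  -- Qv is a clique
  have hQvclique : G.IsClique (Qv G v) :=
    hv.insert (fun b hb _ => hb)
  -- any clique containing v is a subset of Qv
  have hsubQv : ∀ K : Set V, G.IsClique K → v ∈ K → K ⊆ Qv G v := by
    intro K hK hvK x hx
    by_cases hxv : x = v
    · exact hxv ▸ Set.mem_insert _ _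
    · exact Set.mem_insert_of_mem _ (hK hvK hx (fun h => hxv h.symm))
  -- pick q' ∈ Q' \ Sv
  obtain ⟨q', hq'Q', hq'nS⟩ := Set.exists_of_ssubset hSsub
  have hSvQ' : Sv G v ⊆ Q' := hSsub.1
  -- v ∉ Sv
  have hvnS : v ∉ Sv G v := by
    rintro ⟨-, y, hyQ, hadj⟩
    exact hyQ (Set.mem_insert_of_mem _ hadj)
  -- q' ∉ Qv
  have hq'nQv : q' ∉ Qv G v := by
    intro hq'Qv
    -- q' has no neighbor outside Qv, so Q' ⊆ Qv
    have hQ'sub : Q' ⊆ Qv G v := by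
      intro x hx
      by_cases hxq : x = q'
      · exact hxq ▸ hq'Qv
      · by_contra hxQv
        exact hq'nS ⟨hq'Qv, x, hxQv, (hQ'max.1 hx hq'Q' hxq).symm⟩
    exact hQ'ne (hQ'max.2 _ hQvclique hQ'sub)
  have hvq' : v ≠ q' := fun h => hq'nQv (h ▸ Set.mem_insert _ _)
  have hnadj : ¬ G.Adj v q' := fun h => hq'nQv (Set.mem_insert_of_mem _ h)
  refine ⟨v, q', hvq', hnadj, hvnS, hq'nS, ?_, ?_⟩
  · -- separation: any walk from v to q' meets Sv
    have key : ∀ (a b : V) (p : G.Walk a b), a ∈ Qv G v → b ∉ Qv G v →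
        ∃ x ∈ p.support, x ∈ Sv G v := by
      intro a b p
      induction p with
      | nil => intro ha hb; exact absurd ha hb
      | @cons a' c b' hadj p ih =>
        intro ha hb
        by_cases hc : c ∈ Qv G v
        · obtain ⟨x, hx, hxS⟩ := ih hc hb
          exact ⟨x, by simp [hx], hxS⟩
        · exact ⟨a', by simp, ⟨ha, c, hc, hadj⟩⟩
    intro p
    exact key v q' p (Set.mem_insert _ _) hq'nQv
  · -- minimality
    intro S' hS' hsep
    obtain ⟨s, hsS, hsS'⟩ := Set.exists_of_ssubset hS'
    have hsQ' : s ∈ Q' := hSvQ' hsS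
    have hsv : s ≠ v := fun h => hvnS (h ▸ hsS)
    have hsq' : s ≠ q' := fun h => hq'nS (h ▸ hsS)
    have hvs : G.Adj v s := by
      have := hsS.1
      rcases this with h | h
      · exact absurd h hsv
      · exact h
    have hsq'adj : G.Adj s q' := hQ'max.1 hsQ' hq'Q' hsq'
    obtain ⟨x, hx, hxS'⟩ := hsep ((Walk.cons hvs (Walk.cons hsq'adj Walk.nil)))
    simp only [Walk.support_cons, Walk.support_nil, List.mem_cons,
      List.mem_singleton, List.not_mem_nil, or_false] at hx
    rcases hx with rfl | rfl | rfl
    · exact hvnS (hS'.1 hxS')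
    · exact hsS' hxS'
    · exact hq'nS (hS'.1 hxS')
end

section
/- Let G be a chordal graph with a clique tree T, and suppose that R_a and R_b are two maximal cliques of G such that no other maximal clique of G contains R_a ∩ R_b. Then R_a and R_b are adjacent in every clique tree of G. -/
open SimpleGraph

variable {V : Type*}

/-! Every clique on the tree path from `Ra` to `Rb` contains `Ra ∩ Rb` (the cliques containing a
given vertex form a subtree), so by hypothesis the path has no interior vertex. -/

theorem SimpleGraph.Walk.adj_of_support_subset_pair {α : Type*} {T : SimpleGraph α} {a b : α}
    (hab : a ≠ b) (p : T.Walk a b) (hp : ∀ x ∈ p.support, x = a ∨ x = b) : T.Adj a b := by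
  cases p with
  | nil => exact absurd rfl hab
  | @cons _ c _ hac _ =>
    rcases hp c (by simp) with rfl | rfl
    · exact absurd hac T.irrefl
    · exact hac

theorem SimpleGraph.IsAcyclic.mem_of_mem_support_isPath {α : Type*} {T : SimpleGraph α}
    (hT : T.IsAcyclic) {S : Set α} (hS : (T.induce S).Preconnected) {a b : α} (ha : a ∈ S)
    (hb : b ∈ S) {p : T.Walk a b} (hp : p.IsPath) : ∀ x ∈ p.support, x ∈ S := by
  classical
  obtain ⟨w⟩ := hS ⟨a, ha⟩ ⟨b, hb⟩
  set q := (w.map (Embedding.induce S).toHom).bypass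
  have hq : ∀ x ∈ q.support, x ∈ S := fun x hx => by
    have hx' := Walk.support_bypass_subset_support _ hx
    rw [Walk.support_map, List.mem_map] at hx'
    obtain ⟨y, -, rfl⟩ := hx'
    exact y.2
  have hpq : p = q :=
    congrArg Subtype.val ((hT.subsingleton_path a b).elim ⟨p, hp⟩ ⟨q, Walk.bypass_isPath _⟩)
  exact hpq ▸ hq

theorem IsCliqueTree.inter_subset_of_onTreePath {G : SimpleGraph V}
    {T : SimpleGraph (MaxCliques G)} (hT : IsCliqueTree G T) {Q R Q' : MaxCliques G}
    (h : OnTreePath T Q R Q') : Q.1 ∩ Q'.1 ⊆ R.1 := by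
  obtain ⟨p, hp, hR⟩ := h
  exact fun v hv =>
    hT.1.isAcyclic.mem_of_mem_support_isPath (hT.2 v).preconnected hv.1 hv.2 hp R hR

theorem stmt19_general (G : SimpleGraph V)
    (Ra Rb : MaxCliques G) (hne : Ra ≠ Rb)
    (honly : ∀ Q : MaxCliques G, Ra.1 ∩ Rb.1 ⊆ Q.1 → Q = Ra ∨ Q = Rb) :
    ∀ T' : SimpleGraph (MaxCliques G), IsCliqueTree G T' → T'.Adj Ra Rb := by
  intro T' hT'
  obtain ⟨p, hp, -⟩ := hT'.1.existsUnique_path Ra Rb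
  exact p.adj_of_support_subset_pair hne fun Q hQ =>
    honly Q (hT'.inter_subset_of_onTreePath ⟨p, hp, hQ⟩)

theorem stmt19 [Fintype V] (G : SimpleGraph V) (hG : Chordal G)
    (T : SimpleGraph (MaxCliques G)) (hT : IsCliqueTree G T)
    (Ra Rb : MaxCliques G) (hne : Ra ≠ Rb)
    (honly : ∀ Q : MaxCliques G, Ra.1 ∩ Rb.1 ⊆ Q.1 → Q = Ra ∨ Q = Rb) :
    ∀ T' : SimpleGraph (MaxCliques G), IsCliqueTree G T' → T'.Adj Ra Rb :=
  stmt19_general G Ra Rb hne honly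
end
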